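/- arXiv:1405.0535 — 2 statements merged into one kernel-verified Lean document; each statement's English description precedes it below -/
import Mathlib

section
/- Suppose (x*,z*) satisfies the KKT conditions for (P₁), i.e., c + x* + Aᵀz* ≥ 0, Ax* = b, x* ≥ 0, and (c + x* + Aᵀz*)ᵀx* = 0, and let K > ‖c + x* + Aᵀz*‖_∞. If (x̄,z̄) is a saddle point of L^K, then x̄ = x*; in particular, x̄ is the unique solution of the regularized problem (P₁). -/
open Matrix BigOperators

noncomputable def LK {n m : ℕ} (A : Matrix (Fin m) (Fin n) ℝ) (b : Fin m → ℝ)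
    (c : Fin n → ℝ) (K : ℝ) (x : Fin n → ℝ) (z : Fin m → ℝ) : ℝ :=
  c ⬝ᵥ x + (1 / 2) * (x ⬝ᵥ x)
    + (1 / 2) * ((A *ᵥ x - b) ⬝ᵥ (A *ᵥ x - b))
    + z ⬝ᵥ (A *ᵥ x - b)
    + K * ∑ i, max 0 (-(x i))

noncomputable def fmap {n m : ℕ} (A : Matrix (Fin m) (Fin n) ℝ) (b : Fin m → ℝ)
    (c : Fin n → ℝ) (x : Fin n → ℝ) (z : Fin m → ℝ) : Fin n → ℝ :=
  -(Aᵀ *ᵥ z + c + x) - Aᵀ *ᵥ (A *ᵥ x - b)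

def sgm {n m : ℕ} (A : Matrix (Fin m) (Fin n) ℝ) (b : Fin m → ℝ)
    (c : Fin n → ℝ) (x : Fin n → ℝ) (z : Fin m → ℝ) : Set (Fin n) :=
  {i | 0 ≤ fmap A b c x z i ∨ 0 < x i}

open Classical in
noncomputable def ISet {ι : Type*} [Fintype ι] [DecidableEq ι] (S : Set ι) : Matrix ι ι ℝ :=
  Matrix.diagonal fun i => if i ∈ S then 1 else 0

def IsSaddle {n m : ℕ} (A : Matrix (Fin m) (Fin n) ℝ) (b : Fin m → ℝ)
    (c : Fin n → ℝ) (K : ℝ) (xb : Fin n → ℝ) (zb : Fin m → ℝ) : Prop :=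
  ∀ x z, LK A b c K xb z ≤ LK A b c K xb zb ∧ LK A b c K xb zb ≤ LK A b c K x zb

/-!
Write `s = c + x* + Aᵀz*` and `|·|` for the Euclidean norm. Since `sᵀx* = 0` and `Ax* = b`,
`L^K(x, z*) = L^K(x*, z*) + (sᵀx + K ∑ max(0, -xᵢ)) + ½|x - x*|² + ½|A(x - x*)|²`,
and `0 ≤ sᵢ < K` makes the bracketed penalty term nonnegative, so `L^K(·, z*)` grows at least like
`½|x - x*|²` away from `x*`. At a saddle point, `L^K(x̄, ·)` is affine and bounded above, hence
constant: `Ax̄ = b`. Then `L^K(x̄, z*) = L^K(x̄, z̄) ≤ L^K(x*, z̄) = L^K(x*, z*)` forces `x̄ = x*`.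
On the feasible set `L^K(·, z*)` is the objective of (P₁), so the same growth bound shows that `x*`
is its unique minimiser.
-/

section DotProduct

variable {ι R : Type*} [Fintype ι] [Ring R] [LinearOrder R] [IsStrictOrderedRing R]

lemma dotProduct_self_nonneg (v : ι → R) : 0 ≤ v ⬝ᵥ v :=
  Finset.sum_nonneg fun _ _ => mul_self_nonneg _

lemma eq_of_dotProduct_self_sub_nonpos {v w : ι → R} (h : (v - w) ⬝ᵥ (v - w) ≤ 0) : v = w :=
  sub_eq_zero.mp <| dotProduct_self_eq_zero.mp <| h.antisymm (dotProduct_self_nonneg _)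

end DotProduct

lemma dotProduct_add_mul_sum_max_neg_nonneg {ι : Type*} [Fintype ι] {s : ι → ℝ} {K : ℝ}
    (hs : ∀ i, 0 ≤ s i) (hsK : ∀ i, s i ≤ K) (x : ι → ℝ) :
    0 ≤ s ⬝ᵥ x + K * ∑ i, max 0 (-x i) := by
  rw [dotProduct, Finset.mul_sum, ← Finset.sum_add_distrib]
  refine Finset.sum_nonneg fun i _ => ?_
  rcases le_total 0 (x i) with hx | hx
  · rw [max_eq_left (neg_nonpos.mpr hx)]
    nlinarith [hs i]
  · rw [max_eq_right (neg_nonneg.mpr hx)]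
    nlinarith [hsK i]

section AugmentedLagrangian

variable {n m : ℕ} (A : Matrix (Fin m) (Fin n) ℝ) (b : Fin m → ℝ) (c : Fin n → ℝ) (K : ℝ)

lemma LK_add_right (x : Fin n → ℝ) (z w : Fin m → ℝ) :
    LK A b c K x (z + w) = LK A b c K x z + w ⬝ᵥ (A *ᵥ x - b) := by
  simp only [LK, add_dotProduct]
  ring

lemma LK_of_mulVec_eq {x : Fin n → ℝ} (hx : A *ᵥ x = b) (z : Fin m → ℝ) :
    LK A b c K x z = c ⬝ᵥ x + (1 / 2) * (x ⬝ᵥ x) + K * ∑ i, max 0 (-x i) := by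
  simp [LK, hx]

lemma LK_of_feasible {x : Fin n → ℝ} (hx : A *ᵥ x = b) (hx0 : ∀ i, 0 ≤ x i) (z : Fin m → ℝ) :
    LK A b c K x z = c ⬝ᵥ x + (1 / 2) * (x ⬝ᵥ x) := by
  rw [LK_of_mulVec_eq A b c K hx,
    Finset.sum_eq_zero fun i _ => max_eq_left (neg_nonpos.mpr (hx0 i)), mul_zero, add_zero]

variable {A b c K}

lemma mulVec_eq_of_isSaddle {xb : Fin n → ℝ} {zb : Fin m → ℝ} (h : IsSaddle A b c K xb zb) :
    A *ᵥ xb = b := by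
  have hle := (h xb (zb + (A *ᵥ xb - b))).1
  rw [LK_add_right] at hle
  exact eq_of_dotProduct_self_sub_nonpos (by linarith)

variable {xs : Fin n → ℝ} {zs : Fin m → ℝ}

lemma LK_eq_of_KKT (hfeas : A *ᵥ xs = b) (hxs : ∀ i, 0 ≤ xs i)
    (hcompl : (c + xs + Aᵀ *ᵥ zs) ⬝ᵥ xs = 0) (x : Fin n → ℝ) :
    LK A b c K x zs = LK A b c K xs zs
      + ((c + xs + Aᵀ *ᵥ zs) ⬝ᵥ x + K * ∑ i, max 0 (-x i))
      + (1 / 2) * ((x - xs) ⬝ᵥ (x - xs))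
      + (1 / 2) * ((A *ᵥ (x - xs)) ⬝ᵥ (A *ᵥ (x - xs))) := by
  have hres : A *ᵥ x - b = A *ᵥ (x - xs) := by rw [mulVec_sub, hfeas]
  have htr (v : Fin n → ℝ) : (Aᵀ *ᵥ zs) ⬝ᵥ v = zs ⬝ᵥ (A *ᵥ v) := by
    rw [mulVec_transpose, dotProduct_mulVec]
  rw [LK_of_feasible A b c K hfeas hxs, LK, hres]
  simp only [add_dotProduct, sub_dotProduct, dotProduct_sub, mulVec_sub, htr,
    dotProduct_comm x xs] at hcompl ⊢
  linarith

lemma LK_add_half_dist_le_of_KKT (hs : ∀ i, 0 ≤ (c + xs + Aᵀ *ᵥ zs) i)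
    (hsK : ∀ i, (c + xs + Aᵀ *ᵥ zs) i ≤ K) (hfeas : A *ᵥ xs = b) (hxs : ∀ i, 0 ≤ xs i)
    (hcompl : (c + xs + Aᵀ *ᵥ zs) ⬝ᵥ xs = 0) (x : Fin n → ℝ) :
    LK A b c K xs zs + (1 / 2) * ((x - xs) ⬝ᵥ (x - xs)) ≤ LK A b c K x zs := by
  rw [LK_eq_of_KKT hfeas hxs hcompl x]
  have := dotProduct_add_mul_sum_max_neg_nonneg hs hsK x
  have := dotProduct_self_nonneg (A *ᵥ (x - xs))
  linarith

end AugmentedLagrangian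

/-- If (x*,z*) satisfies the KKT conditions for (P₁), K > ‖c + x* + Aᵀz*‖_∞,
and (x̄,z̄) is a saddle point of L^K, then x̄ = x*; in particular x̄ is the unique solution
of the regularized problem (P₁). -/
theorem saddle_gives_solution (n m : ℕ) (c : Fin n → ℝ) (b : Fin m → ℝ)
    (A : Matrix (Fin m) (Fin n) ℝ) (xs : Fin n → ℝ) (zs : Fin m → ℝ) (K : ℝ)
    (hKKT1 : ∀ i, 0 ≤ (c + xs + Aᵀ *ᵥ zs) i)
    (hKKT2 : A *ᵥ xs = b)
    (hKKT3 : ∀ i, 0 ≤ xs i)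
    (hKKT4 : (c + xs + Aᵀ *ᵥ zs) ⬝ᵥ xs = 0)
    (hK : ‖c + xs + Aᵀ *ᵥ zs‖ < K)
    (xb : Fin n → ℝ) (zb : Fin m → ℝ)
    (hsaddle : IsSaddle A b c K xb zb) :
    xb = xs ∧
    -- x̄ is a solution of (P₁)
    ((A *ᵥ xb = b ∧ ∀ i, 0 ≤ xb i) ∧
      ∀ y : Fin n → ℝ, A *ᵥ y = b → (∀ i, 0 ≤ y i) →
        c ⬝ᵥ xb + (1 / 2) * (xb ⬝ᵥ xb) ≤ c ⬝ᵥ y + (1 / 2) * (y ⬝ᵥ y)) ∧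
    -- and it is the unique such solution
    (∀ y : Fin n → ℝ,
      ((A *ᵥ y = b ∧ ∀ i, 0 ≤ y i) ∧
        ∀ w : Fin n → ℝ, A *ᵥ w = b → (∀ i, 0 ≤ w i) →
          c ⬝ᵥ y + (1 / 2) * (y ⬝ᵥ y) ≤ c ⬝ᵥ w + (1 / 2) * (w ⬝ᵥ w)) → y = xb) := by
  have hsK i : (c + xs + Aᵀ *ᵥ zs) i ≤ K :=
    ((Real.le_norm_self _).trans (norm_le_pi_norm _ i)).trans hK.le
  have growth := LK_add_half_dist_le_of_KKT hKKT1 hsK hKKT2 hKKT3 hKKT4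
  have hxb : A *ᵥ xb = b := mulVec_eq_of_isSaddle hsaddle
  obtain rfl : xb = xs := by
    have hle : LK A b c K xb zs ≤ LK A b c K xs zs := by
      simpa only [LK_of_mulVec_eq A b c K hxb, LK_of_mulVec_eq A b c K hKKT2]
        using (hsaddle xs zb).2
    exact eq_of_dotProduct_self_sub_nonpos (by linarith [growth xb])
  have objective_growth y (hy : A *ᵥ y = b) (hy0 : ∀ i, 0 ≤ y i) :
      c ⬝ᵥ xb + (1 / 2) * (xb ⬝ᵥ xb) + (1 / 2) * ((y - xb) ⬝ᵥ (y - xb))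
        ≤ c ⬝ᵥ y + (1 / 2) * (y ⬝ᵥ y) := by
    simpa only [LK_of_feasible A b c K hy hy0, LK_of_feasible A b c K hKKT2 hKKT3] using growth y
  refine ⟨rfl, ⟨⟨hKKT2, hKKT3⟩, fun y hy hy0 => ?_⟩, fun y ⟨⟨hy, hy0⟩, hymin⟩ => ?_⟩
  · linarith [objective_growth y hy hy0, dotProduct_self_nonneg (y - xb)]
  · exact eq_of_dotProduct_self_sub_nonpos (by linarith [objective_growth y hy hy0, hymin xb hKKT2 hKKT3])
end

section
/- Assume ρ(AᵀA) ≤ 1 (ρ the spectral radius), x̂ ∈ ℝⁿ with x̂ ≥ 0, ẑ ∈ ℝᵐ, K ≥ ‖f(x̂,ẑ)‖_∞, and (x̄,z̄) is a saddle point of L^K with Ax̄ = b and x̄ ≥ 0. Let x ∈ ℝⁿ, z ∈ ℝᵐ, set p = σ(x,z), p̂ = σ(x̂,ẑ), e_x = x − x̂, e_z = z − ẑ, and assume p̂ ⊆ p. Then the quantity 𝓛 := (x − x̄)ᵀ I_{p̂} f(x̂,ẑ) + (z − z̄)ᵀ(Ax̂ − b) − f(x,z)ᵀ I_p (AᵀA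 + I) I_{p̂} f(x̂,ẑ) − f(x,z)ᵀ I_p Aᵀ(Ax̂ − b) + (Ax − b)ᵀ A I_{p̂} f(x̂,ẑ) (which is the Lie derivative of the Lyapunov function V = V₁ + V₂ along the sample-and-hold flow F(x̂,ẑ) = (I_{p̂} f(x̂,ẑ), Ax̂ − b) whenever that Lie derivative exists) satisfies 𝓛 ≤ −½ f(x̂,ẑ)ᵀ I_{p̂} f(x̂,ẑ) − ¼ (Ax̂ − b)ᵀ(Ax̂ − b) + 40 e_xᵀe_x + 20 e_zᵀe_z + 15 f(x,z)ᵀ I_{p∖p̂} f(x,z). -/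
open Matrix BigOperators

/-!
Write `r = Ax̂ − b`, `ĝ = I_{p̂} f(x̂,ẑ)`, `g = I_p f(x,z)` and `d = g − ĝ`. Moving `I_p` onto
`f(x,z)`, the Lie derivative equals `(x̂ − x̄)ᵀĝ + (ẑ − z̄)ᵀr`, plus the error terms
`e_xᵀĝ + e_zᵀr + (Ae_x)ᵀ(Aĝ) − dᵀĝ − (Ad)ᵀ(Aĝ) − (Ad)ᵀr`, minus `ĝᵀĝ + ‖Aĝ‖²`.
The first part is at most `−½‖r‖²`: `I_{p̂}` only discards coordinates with `x̂ᵢ = 0` and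
`fᵢ(x̂,ẑ) < 0`, and the saddle inequality in `x` compares two values of a strongly convex
quadratic. The hypothesis `ρ(AᵀA) ≤ 1` means `AᵀA ≤ 1` in the Loewner order, so `‖A‖ = ‖Aᵀ‖ ≤ 1`
and `f` is Lipschitz; with `p̂ ⊆ p`, `d = I_{p∖p̂} f(x,z) + I_{p̂}(f(x,z) − f(x̂,ẑ))` gives
`‖d‖ ≤ 2‖e_x‖ + ‖e_z‖ + ‖I_{p∖p̂} f(x,z)‖`. Cauchy–Schwarz on the error terms and Young's
inequality, absorbing them into `½ ĝᵀĝ` and `¼ ‖r‖²`, produce the constants 40, 20, 15.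
-/

section L2

variable {ι : Type*} [Fintype ι]

-- The norm of `ι → ℝ` is the sup norm.
noncomputable def l2norm (v : ι → ℝ) : ℝ := ‖(WithLp.toLp 2 v : EuclideanSpace ℝ ι)‖

lemma l2norm_nonneg (v : ι → ℝ) : 0 ≤ l2norm v := norm_nonneg _

lemma dotProduct_self_eq_l2norm_sq (v : ι → ℝ) : v ⬝ᵥ v = l2norm v ^ 2 := by
  rw [l2norm, ← real_inner_self_eq_norm_sq, EuclideanSpace.inner_toLp_toLp, star_trivial]

lemma abs_dotProduct_le_l2norm_mul (u v : ι → ℝ) : |u ⬝ᵥ v| ≤ l2norm u * l2norm v := by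
  have := abs_real_inner_le_norm (WithLp.toLp 2 u : EuclideanSpace ℝ ι) (WithLp.toLp 2 v)
  rwa [EuclideanSpace.inner_toLp_toLp, star_trivial, dotProduct_comm] at this

lemma abs_dotProduct_le_of_l2norm_le {u v : ι → ℝ} {α β : ℝ} (hu : l2norm u ≤ α)
    (hv : l2norm v ≤ β) : |u ⬝ᵥ v| ≤ α * β :=
  (abs_dotProduct_le_l2norm_mul u v).trans
    (mul_le_mul hu hv (l2norm_nonneg v) ((l2norm_nonneg u).trans hu))

lemma l2norm_add_le (u v : ι → ℝ) : l2norm (u + v) ≤ l2norm u + l2norm v := by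
  simpa only [l2norm, WithLp.toLp_add] using
    norm_add_le (WithLp.toLp 2 u : EuclideanSpace ℝ ι) (WithLp.toLp 2 v)

lemma l2norm_neg (v : ι → ℝ) : l2norm (-v) = l2norm v := by
  rw [l2norm, WithLp.toLp_neg, norm_neg, l2norm]

lemma sum_max_zero_neg_eq_zero {v : ι → ℝ} (hv : ∀ i, 0 ≤ v i) : ∑ i, max 0 (-(v i)) = 0 :=
  Finset.sum_eq_zero fun i _ => max_eq_left (neg_nonpos.2 (hv i))

lemma l2norm_le_l2norm_iff {κ : Type*} [Fintype κ] {u : ι → ℝ} {v : κ → ℝ} :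
    l2norm u ≤ l2norm v ↔ u ⬝ᵥ u ≤ v ⬝ᵥ v := by
  rw [dotProduct_self_eq_l2norm_sq, dotProduct_self_eq_l2norm_sq,
    sq_le_sq₀ (l2norm_nonneg u) (l2norm_nonneg v)]

end L2

section ISet

variable {ι : Type*} [Fintype ι] [DecidableEq ι]

open Classical in
lemma ISet_mulVec_apply (S : Set ι) (v : ι → ℝ) (i : ι) :
    (ISet S *ᵥ v) i = if i ∈ S then v i else 0 := by
  simp [ISet, mulVec_diagonal]

lemma transpose_ISet (S : Set ι) : (ISet S)ᵀ = ISet S := diagonal_transpose _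

lemma dotProduct_ISet_mulVec_comm (S : Set ι) (u v : ι → ℝ) :
    u ⬝ᵥ (ISet S *ᵥ v) = (ISet S *ᵥ u) ⬝ᵥ v := by
  rw [dotProduct_mulVec, ← mulVec_transpose, transpose_ISet, dotProduct_comm]

lemma ISet_mulVec_dotProduct_self (S : Set ι) (v : ι → ℝ) :
    (ISet S *ᵥ v) ⬝ᵥ (ISet S *ᵥ v) = v ⬝ᵥ (ISet S *ᵥ v) := by
  classical
  refine Finset.sum_congr rfl fun i _ => ?_
  by_cases h : i ∈ S <;> simp [ISet_mulVec_apply, h]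

lemma l2norm_ISet_mulVec_le (S : Set ι) (v : ι → ℝ) : l2norm (ISet S *ᵥ v) ≤ l2norm v := by
  classical
  refine l2norm_le_l2norm_iff.2 (Finset.sum_le_sum fun i _ => ?_)
  by_cases h : i ∈ S <;> simp [ISet_mulVec_apply, h, mul_self_nonneg]

lemma ISet_mulVec_sub_ISet_mulVec {S T : Set ι} (hTS : T ⊆ S) (u v : ι → ℝ) :
    ISet S *ᵥ u - ISet T *ᵥ v = ISet (S \ T) *ᵥ u + ISet T *ᵥ (u - v) := by
  classical
  ext i
  by_cases hT : i ∈ T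
  · simp [ISet_mulVec_apply, hT, hTS hT]
  · by_cases hS : i ∈ S <;> simp [ISet_mulVec_apply, hT, hS]

end ISet

section SpectralRadius

variable {ι κ : Type*} [Fintype ι] [DecidableEq ι] [Fintype κ] {A : Matrix κ ι ℝ}

open scoped MatrixOrder in
lemma posSemidef_one_sub_transpose_mul_self (hA : spectralRadius ℝ (Aᵀ * A) ≤ 1) :
    (1 - Aᵀ * A).PosSemidef := by
  have hsa : IsSelfAdjoint (Aᵀ * A) := by
    have := isHermitian_conjTranspose_mul_self A
    rwa [conjTranspose_eq_transpose_of_trivial] at this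
  refine Matrix.le_iff.1 (CFC.le_one (R := ℝ) (fun r hr => ?_) hsa)
  have hr' : (‖r‖₊ : ENNReal) ≤ 1 :=
    (le_iSup₂ (f := fun k (_ : k ∈ spectrum ℝ (Aᵀ * A)) => (‖k‖₊ : ENNReal)) r hr).trans hA
  exact (le_abs_self r).trans (by exact_mod_cast hr')

lemma mulVec_dotProduct_self_le (hA : spectralRadius ℝ (Aᵀ * A) ≤ 1) (v : ι → ℝ) :
    (A *ᵥ v) ⬝ᵥ (A *ᵥ v) ≤ v ⬝ᵥ v := by
  have := (posSemidef_one_sub_transpose_mul_self hA).dotProduct_mulVec_nonneg v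
  rw [star_trivial, sub_mulVec, one_mulVec, dotProduct_sub, ← mulVec_mulVec,
    dotProduct_mulVec, vecMul_transpose] at this
  linarith

lemma l2norm_mulVec_le (hA : spectralRadius ℝ (Aᵀ * A) ≤ 1) (v : ι → ℝ) :
    l2norm (A *ᵥ v) ≤ l2norm v :=
  l2norm_le_l2norm_iff.2 (mulVec_dotProduct_self_le hA v)

lemma l2norm_transpose_mulVec_le (hA : spectralRadius ℝ (Aᵀ * A) ≤ 1) (u : κ → ℝ) :
    l2norm (Aᵀ *ᵥ u) ≤ l2norm u := by
  have hsq : l2norm (Aᵀ *ᵥ u) ^ 2 ≤ l2norm (Aᵀ *ᵥ u) * l2norm u := by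
    calc l2norm (Aᵀ *ᵥ u) ^ 2 = (A *ᵥ (Aᵀ *ᵥ u)) ⬝ᵥ u := by
          rw [← dotProduct_self_eq_l2norm_sq, dotProduct_mulVec, vecMul_transpose]
      _ ≤ l2norm (A *ᵥ (Aᵀ *ᵥ u)) * l2norm u :=
          (le_abs_self _).trans (abs_dotProduct_le_l2norm_mul _ _)
      _ ≤ l2norm (Aᵀ *ᵥ u) * l2norm u := by
          gcongr; exacts [l2norm_nonneg u, l2norm_mulVec_le hA _]
  nlinarith [l2norm_nonneg (Aᵀ *ᵥ u), l2norm_nonneg u]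

end SpectralRadius

/- Young: `(6a + 2b + 2Q) G ≤ ½ G² + ½ (6a + 2b + 2Q)²` and
`(2a + 2b + Q) H ≤ ¼ H² + (2a + 2b + Q)²`; the two squares add up to at most
`40 a² + 20 b² + 15 Q²`. -/
lemma young_cross_terms_le {a b Q G H D : ℝ} (hG : 0 ≤ G) (hH : 0 ≤ H) (hD : D ≤ 2 * a + b + Q) :
    (2 * a + 2 * D) * G + (b + D) * H - G ^ 2 - 1 / 2 * H ^ 2
      ≤ -(1 / 2) * G ^ 2 - 1 / 4 * H ^ 2 + 40 * a ^ 2 + 20 * b ^ 2 + 15 * Q ^ 2 := by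
  nlinarith [sq_nonneg (G - (6*a + 2*b + 2*Q)), sq_nonneg (H - (4*a + 4*b + 2*Q)),
    sq_nonneg (a - b), sq_nonneg (a - Q), sq_nonneg (b - Q), mul_le_mul_of_nonneg_right hD hG,
    mul_le_mul_of_nonneg_right hD hH]

section SaddleFlow

variable {n m : ℕ} (A : Matrix (Fin m) (Fin n) ℝ) (b : Fin m → ℝ) (c : Fin n → ℝ)

lemma mem_sgm {x : Fin n → ℝ} {z : Fin m → ℝ} {i : Fin n} :
    i ∈ sgm A b c x z ↔ 0 ≤ fmap A b c x z i ∨ 0 < x i := Iff.rfl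

lemma fmap_sub_fmap (x xh : Fin n → ℝ) (z zh : Fin m → ℝ) :
    fmap A b c x z - fmap A b c xh zh
      = -((x - xh) + Aᵀ *ᵥ (A *ᵥ (x - xh)) + Aᵀ *ᵥ (z - zh)) := by
  ext i
  simp only [fmap, mulVec_sub, Pi.sub_apply, Pi.add_apply, Pi.neg_apply]
  ring

variable {A b c}

lemma l2norm_fmap_sub_le (hA : spectralRadius ℝ (Aᵀ * A) ≤ 1) (x xh : Fin n → ℝ)
    (z zh : Fin m → ℝ) :
    l2norm (fmap A b c x z - fmap A b c xh zh) ≤ 2 * l2norm (x - xh) + l2norm (z - zh) := by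
  rw [fmap_sub_fmap, l2norm_neg]
  have hAA := (l2norm_transpose_mulVec_le hA (A *ᵥ (x - xh))).trans (l2norm_mulVec_le hA _)
  linarith [l2norm_add_le (x - xh + Aᵀ *ᵥ (A *ᵥ (x - xh))) (Aᵀ *ᵥ (z - zh)),
    l2norm_add_le (x - xh) (Aᵀ *ᵥ (A *ᵥ (x - xh))), l2norm_transpose_mulVec_le hA (z - zh)]

lemma dotProduct_ISet_sgm_fmap_le {xh xb : Fin n → ℝ} {zh : Fin m → ℝ} (hxh : ∀ i, 0 ≤ xh i)
    (hxb : ∀ i, 0 ≤ xb i) :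
    (xh - xb) ⬝ᵥ (ISet (sgm A b c xh zh) *ᵥ fmap A b c xh zh)
      ≤ (xh - xb) ⬝ᵥ fmap A b c xh zh := by
  classical
  refine Finset.sum_le_sum fun i _ => ?_
  by_cases hi : i ∈ sgm A b c xh zh
  · simp [ISet_mulVec_apply, hi]
  · rw [ISet_mulVec_apply, if_neg hi]
    rw [mem_sgm, not_or, not_le, not_lt] at hi
    have : xh i = 0 := le_antisymm hi.2 (hxh i)
    simp only [Pi.sub_apply, this, zero_sub, mul_zero]
    nlinarith [hxb i]

lemma dotProduct_fmap_add_le_of_isSaddle {K : ℝ} {xb xh : Fin n → ℝ} {zb zh : Fin m → ℝ}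
    (hsaddle : IsSaddle A b c K xb zb) (hAxb : A *ᵥ xb = b) (hxb : ∀ i, 0 ≤ xb i)
    (hxh : ∀ i, 0 ≤ xh i) :
    (xh - xb) ⬝ᵥ fmap A b c xh zh + (zh - zb) ⬝ᵥ (A *ᵥ xh - b)
      ≤ -(1 / 2) * ((A *ᵥ xh - b) ⬝ᵥ (A *ᵥ xh - b)) := by
  -- On `x ≥ 0`, `L^K(·, z̄)` is a quadratic with Hessian `1 + AᵀA` and the left side is its
  -- derivative at `x̂` in the direction `x̄ - x̂`; as `L^K(x̄, z̄) ≤ L^K(x̂, z̄)`, that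
  -- derivative is at most `-½‖x̂ - x̄‖² - ½‖A(x̂ - x̄)‖²`, and `A(x̂ - x̄) = Ax̂ - b`.
  have hL := (hsaddle xh zh).2
  simp only [LK, hAxb, sub_self, dotProduct_zero, sum_max_zero_neg_eq_zero hxb,
    sum_max_zero_neg_eq_zero hxh, mul_zero, add_zero] at hL
  have hadj : ∀ u, (xh - xb) ⬝ᵥ (Aᵀ *ᵥ u) = (A *ᵥ xh - b) ⬝ᵥ u := by
    intro u
    rw [dotProduct_mulVec, vecMul_transpose, mulVec_sub, hAxb]
  have hδ : 0 ≤ (xh - xb) ⬝ᵥ (xh - xb) := dotProduct_self_star_nonneg _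
  rw [fmap, dotProduct_sub, hadj, dotProduct_neg, dotProduct_add, dotProduct_add, hadj]
  simp only [dotProduct_sub, sub_dotProduct] at *
  linarith [dotProduct_comm xh xb, dotProduct_comm c xh, dotProduct_comm c xb,
    dotProduct_comm zh (A *ᵥ xh), dotProduct_comm zh b]

end SaddleFlow

section LieDerivative

variable {ι κ : Type*} [Fintype ι] [DecidableEq ι] [Fintype κ] {A : Matrix κ ι ℝ}

lemma lie_derivative_le_of_l2norm_sub_le (hA : spectralRadius ℝ (Aᵀ * A) ≤ 1)
    {b : κ → ℝ} {x xh xb g gh q : ι → ℝ} {z zh zb : κ → ℝ}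
    (hS : (xh - xb) ⬝ᵥ gh + (zh - zb) ⬝ᵥ (A *ᵥ xh - b)
      ≤ -(1 / 2) * ((A *ᵥ xh - b) ⬝ᵥ (A *ᵥ xh - b)))
    (hd : l2norm (g - gh) ≤ 2 * l2norm (x - xh) + l2norm (z - zh) + l2norm q) :
    (x - xb) ⬝ᵥ gh + (z - zb) ⬝ᵥ (A *ᵥ xh - b) - g ⬝ᵥ ((Aᵀ * A + 1) *ᵥ gh)
        - g ⬝ᵥ (Aᵀ *ᵥ (A *ᵥ xh - b)) + (A *ᵥ x - b) ⬝ᵥ (A *ᵥ gh)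
      ≤ -(1 / 2) * (gh ⬝ᵥ gh) - (1 / 4) * ((A *ᵥ xh - b) ⬝ᵥ (A *ᵥ xh - b))
        + 40 * ((x - xh) ⬝ᵥ (x - xh)) + 20 * ((z - zh) ⬝ᵥ (z - zh)) + 15 * (q ⬝ᵥ q) := by
  set r := A *ᵥ xh - b
  set d := g - gh
  have hexpand : (x - xb) ⬝ᵥ gh + (z - zb) ⬝ᵥ r - g ⬝ᵥ ((Aᵀ * A + 1) *ᵥ gh)
        - g ⬝ᵥ (Aᵀ *ᵥ r) + (A *ᵥ x - b) ⬝ᵥ (A *ᵥ gh)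
      = ((xh - xb) ⬝ᵥ gh + (zh - zb) ⬝ᵥ r) + (x - xh) ⬝ᵥ gh + (z - zh) ⬝ᵥ r
        + (A *ᵥ (x - xh)) ⬝ᵥ (A *ᵥ gh) - d ⬝ᵥ gh - (A *ᵥ d) ⬝ᵥ (A *ᵥ gh) - (A *ᵥ d) ⬝ᵥ r
        - gh ⬝ᵥ gh - (A *ᵥ gh) ⬝ᵥ (A *ᵥ gh) := by
    have hadj : ∀ u, g ⬝ᵥ (Aᵀ *ᵥ u) = (A *ᵥ g) ⬝ᵥ u := fun u => by
      rw [dotProduct_mulVec, vecMul_transpose]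
    rw [add_mulVec, one_mulVec, ← mulVec_mulVec, dotProduct_add, hadj, hadj]
    simp only [d, r, mulVec_sub, dotProduct_sub, sub_dotProduct]
    rw [dotProduct_comm (A *ᵥ gh) (A *ᵥ xh), dotProduct_comm (A *ᵥ gh) b]
    ring
  have hAop := l2norm_mulVec_le hA
  have hx := abs_dotProduct_le_of_l2norm_le (le_refl (l2norm (x - xh))) (le_refl (l2norm gh))
  have hz := abs_dotProduct_le_of_l2norm_le (le_refl (l2norm (z - zh))) (le_refl (l2norm r))
  have hAx := abs_dotProduct_le_of_l2norm_le (hAop (x - xh)) (hAop gh)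
  have hdg := abs_dotProduct_le_of_l2norm_le (le_refl (l2norm d)) (le_refl (l2norm gh))
  have hAdg := abs_dotProduct_le_of_l2norm_le (hAop d) (hAop gh)
  have hAdr := abs_dotProduct_le_of_l2norm_le (hAop d) (le_refl (l2norm r))
  have hscalar := young_cross_terms_le (l2norm_nonneg gh) (l2norm_nonneg r) hd
  simp only [dotProduct_self_eq_l2norm_sq] at hexpand hS ⊢
  rw [hexpand]
  nlinarith [abs_le.1 hx, abs_le.1 hz, abs_le.1 hAx, abs_le.1 hdg, abs_le.1 hAdg, abs_le.1 hAdr,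
    sq_nonneg (l2norm (A *ᵥ gh))]

end LieDerivative

theorem lie_derivative_V_bound_general (n m : ℕ) (c : Fin n → ℝ) (b : Fin m → ℝ)
    (A : Matrix (Fin m) (Fin n) ℝ)
    (hρ : spectralRadius ℝ (Aᵀ * A) ≤ 1)
    (xh : Fin n → ℝ) (zh : Fin m → ℝ) (K : ℝ)
    (hxh : ∀ i, 0 ≤ xh i)
    (xb : Fin n → ℝ) (zb : Fin m → ℝ)
    (hsaddle : IsSaddle A b c K xb zb)
    (hAxb : A *ᵥ xb = b) (hxb : ∀ i, 0 ≤ xb i)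
    (x : Fin n → ℝ) (z : Fin m → ℝ)
    (hsub : sgm A b c xh zh ⊆ sgm A b c x z) :
    (x - xb) ⬝ᵥ (ISet (sgm A b c xh zh) *ᵥ fmap A b c xh zh)
      + (z - zb) ⬝ᵥ (A *ᵥ xh - b)
      - fmap A b c x z ⬝ᵥ (ISet (sgm A b c x z) *ᵥ
          ((Aᵀ * A + 1) *ᵥ (ISet (sgm A b c xh zh) *ᵥ fmap A b c xh zh)))
      - fmap A b c x z ⬝ᵥ (ISet (sgm A b c x z) *ᵥ (Aᵀ *ᵥ (A *ᵥ xh - b)))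
      + (A *ᵥ x - b) ⬝ᵥ (A *ᵥ (ISet (sgm A b c xh zh) *ᵥ fmap A b c xh zh))
    ≤ -(1 / 2) * (fmap A b c xh zh ⬝ᵥ (ISet (sgm A b c xh zh) *ᵥ fmap A b c xh zh))
      - (1 / 4) * ((A *ᵥ xh - b) ⬝ᵥ (A *ᵥ xh - b))
      + 40 * ((x - xh) ⬝ᵥ (x - xh))
      + 20 * ((z - zh) ⬝ᵥ (z - zh))
      + 15 * (fmap A b c x z ⬝ᵥ (ISet (sgm A b c x z \ sgm A b c xh zh) *ᵥ fmap A b c x z)) := by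
  set f := fmap A b c x z
  set fh := fmap A b c xh zh
  set p := sgm A b c x z
  set ph := sgm A b c xh zh
  have hS := (add_le_add_left (dotProduct_ISet_sgm_fmap_le (zh := zh) hxh hxb) _).trans
    (dotProduct_fmap_add_le_of_isSaddle hsaddle hAxb hxb hxh)
  have hd : l2norm (ISet p *ᵥ f - ISet ph *ᵥ fh)
      ≤ 2 * l2norm (x - xh) + l2norm (z - zh) + l2norm (ISet (p \ ph) *ᵥ f) := by
    rw [ISet_mulVec_sub_ISet_mulVec hsub, add_comm (2 * _ + _)]
    exact (l2norm_add_le _ _).trans (add_le_add_right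
      ((l2norm_ISet_mulVec_le ph _).trans (l2norm_fmap_sub_le hρ x xh z zh)) _)
  rw [dotProduct_ISet_mulVec_comm p f, dotProduct_ISet_mulVec_comm p f,
    ← ISet_mulVec_dotProduct_self ph fh, ← ISet_mulVec_dotProduct_self (p \ ph) f]
  exact lie_derivative_le_of_l2norm_sub_le hρ hS hd

/-- Bound on the Lie derivative of the Lyapunov function V = V₁ + V₂ along the
sample-and-hold flow F(x̂,ẑ) = (I_{p̂}f(x̂,ẑ), Ax̂−b), under ρ(AᵀA) ≤ 1, x̂ ≥ 0,
K ≥ ‖f(x̂,ẑ)‖_∞, (x̄,z̄) a saddle point of L^K with Ax̄ = b, x̄ ≥ 0, and p̂ ⊆ p. -/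
theorem lie_derivative_V_bound (n m : ℕ) (c : Fin n → ℝ) (b : Fin m → ℝ)
    (A : Matrix (Fin m) (Fin n) ℝ)
    (hρ : spectralRadius ℝ (Aᵀ * A) ≤ 1)
    (xh : Fin n → ℝ) (zh : Fin m → ℝ) (K : ℝ)
    (hxh : ∀ i, 0 ≤ xh i)
    (hK : ‖fmap A b c xh zh‖ ≤ K)
    (xb : Fin n → ℝ) (zb : Fin m → ℝ)
    (hsaddle : IsSaddle A b c K xb zb)
    (hAxb : A *ᵥ xb = b) (hxb : ∀ i, 0 ≤ xb i)
    (x : Fin n → ℝ) (z : Fin m → ℝ)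
    (hsub : sgm A b c xh zh ⊆ sgm A b c x z) :
    (x - xb) ⬝ᵥ (ISet (sgm A b c xh zh) *ᵥ fmap A b c xh zh)
      + (z - zb) ⬝ᵥ (A *ᵥ xh - b)
      - fmap A b c x z ⬝ᵥ (ISet (sgm A b c x z) *ᵥ
          ((Aᵀ * A + 1) *ᵥ (ISet (sgm A b c xh zh) *ᵥ fmap A b c xh zh)))
      - fmap A b c x z ⬝ᵥ (ISet (sgm A b c x z) *ᵥ (Aᵀ *ᵥ (A *ᵥ xh - b)))
      + (A *ᵥ x - b) ⬝ᵥ (A *ᵥ (ISet (sgm A b c xh zh) *ᵥ fmap A b c xh zh))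
    ≤ -(1 / 2) * (fmap A b c xh zh ⬝ᵥ (ISet (sgm A b c xh zh) *ᵥ fmap A b c xh zh))
      - (1 / 4) * ((A *ᵥ xh - b) ⬝ᵥ (A *ᵥ xh - b))
      + 40 * ((x - xh) ⬝ᵥ (x - xh))
      + 20 * ((z - zh) ⬝ᵥ (z - zh))
      + 15 * (fmap A b c x z ⬝ᵥ (ISet (sgm A b c x z \ sgm A b c xh zh) *ᵥ fmap A b c x z)) :=
  lie_derivative_V_bound_general n m c b A hρ xh zh K hxh xb zb hsaddle hAxb hxb x z hsub
end
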